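/- If a subset $H$ of a unital associative algebra $R$ satisfies $\{shr : s,r\in R,\ h\in H\}\subseteq H$ (i.e., $H$ is closed under two-sided multiplication by $R$), then for every $k\ge1$ the Lie centralizer $\mathrm{L}_k(H)$ is a unital subalgebra of $R$. -/

import Mathlib

/-- `lprod r [x₁, …, xₘ]` is the left-normed commutator `[r, x₁, …, xₘ]_{m+1}`. -/
def lprod {R : Type*} [Ring R] (r : R) (l : List R) : R :=
  l.foldl (fun a x => a * x - x * a) r

/-- The `k`-th Lie centralizer of a subset `H` of `R`:
`Lcen k H = {r : R | [r, x₁, …, x_k]_{k+1} = 0 for all xᵢ ∈ H}`. -/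
def Lcen {R : Type*} [Ring R] (k : ℕ) (H : Set R) : Set R :=
  {r : R | ∀ x : Fin k → R, (∀ i, x i ∈ H) → lprod r (List.ofFn x) = 0}

/-!
The commutator map `r ↦ [r, x₁, …, x_k]` is additive and, for `k ≥ 1`, vanishes on central elements, so
`L_k(H)` is an additive subgroup containing the scalars. Closure under products comes from
`[rs, x] = [r, sx] + [s, xr]`: the two commutators on the right start with `sx, xr ∈ H`, so
both left-normed commutators of length `k + 1` vanish when `r, s ∈ L_k(H)`.
-/

section

variable {R : Type*} [Ring R]

@[simp]
lemma lprod_nil (r : R) : lprod r [] = r := rfl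

lemma lprod_cons (r x : R) (l : List R) : lprod r (x :: l) = lprod (r * x - x * r) l := rfl

lemma lprod_add (a b : R) (l : List R) : lprod (a + b) l = lprod a l + lprod b l := by
  induction l generalizing a b with
  | nil => rfl
  | cons x l ih => rw [lprod_cons, lprod_cons, lprod_cons, ← ih]; congr 1; noncomm_ring

@[simp]
lemma lprod_zero (l : List R) : lprod (0 : R) l = 0 := by
  induction l with
  | nil => rfl
  | cons x l ih => simpa [lprod_cons] using ih

lemma lprod_eq_zero_of_forall_commute {r : R} (hr : ∀ x, Commute r x) {l : List R}
    (hl : l ≠ []) : lprod r l = 0 := by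
  obtain ⟨x, l, rfl⟩ := List.exists_cons_of_ne_nil hl
  simp [lprod_cons, (hr x).eq]

lemma lprod_mul_cons (r s x : R) (l : List R) :
    lprod (r * s) (x :: l) = lprod r (s * x :: l) + lprod s (x * r :: l) := by
  simp only [lprod_cons, ← lprod_add]
  congr 1
  noncomm_ring

variable {k : ℕ} {H : Set R}

lemma mem_Lcen_iff {r : R} :
    r ∈ Lcen k H ↔ ∀ l : List R, l.length = k → (∀ x ∈ l, x ∈ H) → lprod r l = 0 := by
  refine ⟨fun hr l hlen hl => ?_, fun hr x hx => hr _ List.length_ofFn ?_⟩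
  · subst hlen
    simpa using hr l.get fun i => hl _ (l.get_mem i)
  · simpa [List.mem_ofFn] using hx

lemma zero_mem_Lcen : (0 : R) ∈ Lcen k H :=
  mem_Lcen_iff.2 fun l _ _ => lprod_zero l

lemma add_mem_Lcen {r s : R} (hr : r ∈ Lcen k H) (hs : s ∈ Lcen k H) : r + s ∈ Lcen k H := by
  rw [mem_Lcen_iff] at hr hs ⊢
  intro l hlen hl
  rw [lprod_add, hr l hlen hl, hs l hlen hl, add_zero]

lemma mem_Lcen_of_forall_commute (hk : 1 ≤ k) {r : R} (hr : ∀ x, Commute r x) :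
    r ∈ Lcen k H :=
  mem_Lcen_iff.2 fun l hlen _ =>
    lprod_eq_zero_of_forall_commute hr (List.ne_nil_of_length_pos (by omega))

lemma mul_mem_Lcen (hleft : ∀ s, ∀ h ∈ H, s * h ∈ H) (hright : ∀ r, ∀ h ∈ H, h * r ∈ H)
    {r s : R} (hr : r ∈ Lcen k H) (hs : s ∈ Lcen k H) : r * s ∈ Lcen k H := by
  rw [mem_Lcen_iff] at hr hs ⊢
  rintro (_ | ⟨x, l⟩) hlen hl
  · simp [show r = 0 by simpa using hr [] hlen (by simp)]
  · have hx : x ∈ H := hl x List.mem_cons_self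
    have hlH : ∀ y ∈ l, y ∈ H := fun y hy => hl y (List.mem_cons_of_mem x hy)
    rw [lprod_mul_cons, hr (s * x :: l) hlen (by simpa [hleft s x hx] using hlH),
      hs (x * r :: l) hlen (by simpa [hright r x hx] using hlH), add_zero]

end

/-- If `H` is closed under two-sided multiplication by `R` (i.e. `s h r ∈ H` for all
`s, r ∈ R`, `h ∈ H`), then every Lie centralizer `L_k(H)` is a unital subalgebra. -/
theorem Lcen_subalgebra_of_ideal_like {K : Type*} [Field K] {R : Type*} [Ring R]
    [Algebra K R] (H : Set R) (hH : ∀ s r : R, ∀ h ∈ H, s * h * r ∈ H)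
    (k : ℕ) (hk : 1 ≤ k) :
    ∃ A : Subalgebra K R, (A : Set R) = Lcen k H := by
  have hleft : ∀ s, ∀ h ∈ H, s * h ∈ H := fun s h hh => by simpa using hH s 1 h hh
  have hright : ∀ r, ∀ h ∈ H, h * r ∈ H := fun r h hh => by simpa using hH 1 r h hh
  exact ⟨{ carrier := Lcen k H
           mul_mem' := mul_mem_Lcen hleft hright
           add_mem' := add_mem_Lcen
           algebraMap_mem' := fun c => mem_Lcen_of_forall_commute hk (Algebra.commutes c)
           zero_mem' := zero_mem_Lcen
           one_mem' := mem_Lcen_of_forall_commute hk Commute.one_left }, rfl⟩
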